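/- Let d ≥ 1 and let i, j be natural numbers with j ≤ d·i and d·i − j even. Then γ_d(i,j), the number of linearly independent covariants of degree i and order j of the binary d-form, equals the coefficient of t^{(d·i−j)/2} in the power series (1−t) · ∏_{s=1}^{i}(1−t^{d+s}) · (∏_{s=1}^{i}(1−t^s))^{−1} ∈ ℤ[[t]], i.e. the coefficient of t^{(d·i−j)/2} in (1−t)·[d+i choose i]_t, where [d+i choose i]_t is the Gaussian binomial coefficient. -/

import Mathlib

/-!
With `D₂ x_k = (d - k) x_{k+1}`, the derivations `D₁` and `D₂` make `R` an `sl₂`-module in which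
`W_{i,N}` is the weight space of weight `d i - 2N`: `D₁` maps `W_{i,N+1}` to `W_{i,N}`, `D₂` maps
`W_{i,N}` to `W_{i,N+1}`, and `[D₁, D₂]` acts on `W_{i,N}` as `d i - 2N`. The usual `sl₂`
computation shows that `D₁ D₂` is injective on `W_{i,N-1}` when `2N ≤ d i`, so
`D₁ : W_{i,N} → W_{i,N-1}` is onto and `γ_d(i,j) = dim W_{i,N} - dim W_{i,N-1}`.

The monomials form a basis of `W_{i,N}`, so `dim W_{i,N}` is the coefficient of `t^N` in
`∑_α t^(∑ k α_k)`, summed over `α ∈ ℕ^{d+1}` with `|α| = i`. Splitting off the exponent of `x_0`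
gives the `q`-Pascal recursion for this series, which identifies it with the Gaussian binomial
`∏_{s ≤ i} (1 - t^(d+s)) / (1 - t^s)`; multiplying by `1 - t` takes the difference of consecutive
coefficients.
-/

noncomputable def Wspace (d i N : ℕ) : Submodule ℂ (MvPolynomial (Fin (d + 1)) ℂ) :=
  Submodule.span ℂ { p | ∃ α : Fin (d + 1) →₀ ℕ,
    (∑ k, α k) = i ∧ (∑ k : Fin (d + 1), (k : ℕ) * α k) = N ∧
    p = MvPolynomial.monomial α 1 }

noncomputable def D1 (d : ℕ) :
    Derivation ℂ (MvPolynomial (Fin (d + 1)) ℂ) (MvPolynomial (Fin (d + 1)) ℂ) :=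
  MvPolynomial.mkDerivation ℂ (fun k =>
    if _h : 0 < (k : ℕ) then
      ((k : ℕ) : ℂ) •
        MvPolynomial.X (⟨(k : ℕ) - 1, lt_of_le_of_lt (Nat.sub_le _ _) k.isLt⟩ : Fin (d + 1))
    else 0)

open Module

section GaussBinom

open Finset Finset.Nat PowerSeries

theorem Finset.Nat.sum_antidiagonalTuple_succ {β : Type*} [AddCommMonoid β] (k n : ℕ)
    (f : (Fin (k + 1) → ℕ) → β) :
    ∑ α ∈ antidiagonalTuple (k + 1) n, f α
      = ∑ p ∈ antidiagonal n, ∑ γ ∈ antidiagonalTuple k p.2, f (Fin.cons p.1 γ) := by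
  rw [sum_sigma']
  refine sum_bij' (fun α _ => ⟨(α 0, n - α 0), Fin.tail α⟩) (fun x _ => Fin.cons x.1.1 x.2)
    ?_ ?_ ?_ ?_ ?_
  · intro α hα
    rw [mem_antidiagonalTuple, Fin.sum_univ_succ] at hα
    simp only [mem_sigma, HasAntidiagonal.mem_antidiagonal, mem_antidiagonalTuple, Fin.tail]
    omega
  · rintro ⟨⟨a, b⟩, γ⟩ hx
    simp only [mem_sigma, HasAntidiagonal.mem_antidiagonal, mem_antidiagonalTuple] at hx
    rw [mem_antidiagonalTuple, Fin.sum_cons, hx.2, hx.1]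
  · intro α _
    exact Fin.cons_self_tail α
  · rintro ⟨⟨a, b⟩, γ⟩ hx
    simp only [mem_sigma, HasAntidiagonal.mem_antidiagonal] at hx
    simp only [Fin.cons_zero, Fin.tail_cons]
    congr
    omega
  · intro α _
    simp only [Fin.cons_self_tail]

theorem Fin.sum_val_mul_cons {n : ℕ} (a : ℕ) (γ : Fin n → ℕ) :
    ∑ k : Fin (n + 1), (k : ℕ) * Fin.cons (α := fun _ => ℕ) a γ k
      = ∑ k : Fin n, (k : ℕ) * γ k + ∑ k, γ k := by
  simp [Fin.sum_univ_succ, add_mul, sum_add_distrib]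

/-- `∑ t ^ (∑ k α_k)` over `α : Fin (d + 1) → ℕ` with `∑ α_k = i`, that is, the Gaussian binomial
coefficient `[d + i choose i]_t` (see `gaussBinom_mul_prod`). -/
noncomputable def gaussBinom (d i : ℕ) : PowerSeries ℤ :=
  ∑ α ∈ antidiagonalTuple (d + 1) i, X ^ ∑ k : Fin (d + 1), (k : ℕ) * α k

theorem coeff_gaussBinom (d i N : ℕ) :
    coeff N (gaussBinom d i)
      = #{α ∈ antidiagonalTuple (d + 1) i | ∑ k : Fin (d + 1), (k : ℕ) * α k = N} := by
  simp [gaussBinom, coeff_X_pow, eq_comm]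

theorem gaussBinom_zero_left (i : ℕ) : gaussBinom 0 i = 1 := by
  simp [gaussBinom]

theorem gaussBinom_zero_right (d : ℕ) : gaussBinom d 0 = 1 := by
  simp [gaussBinom, antidiagonalTuple_zero_right]

theorem gaussBinom_succ_left (d i : ℕ) :
    gaussBinom (d + 1) i = ∑ b ∈ range (i + 1), X ^ b * gaussBinom d b := by
  have hcons (a b : ℕ) : ∑ γ ∈ antidiagonalTuple (d + 1) b,
      (X : PowerSeries ℤ) ^ ∑ k : Fin (d + 2), (k : ℕ) * Fin.cons (α := fun _ => ℕ) a γ k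
        = X ^ b * gaussBinom d b := by
    rw [gaussBinom, mul_sum]
    refine sum_congr rfl fun γ hγ => ?_
    rw [Fin.sum_val_mul_cons, mem_antidiagonalTuple.1 hγ, pow_add, mul_comm]
  rw [gaussBinom, sum_antidiagonalTuple_succ]
  simp only [hcons]
  rw [← sum_antidiagonal_swap]
  exact sum_antidiagonal_eq_sum_range_succ_mk _ _

theorem gaussBinom_succ_succ (d i : ℕ) :
    gaussBinom (d + 1) (i + 1) = gaussBinom (d + 1) i + X ^ (i + 1) * gaussBinom d (i + 1) := by
  rw [gaussBinom_succ_left, gaussBinom_succ_left, sum_range_succ _ (i + 1)]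

theorem gaussBinom_mul_prod (d i : ℕ) :
    gaussBinom d i * ∏ s ∈ range i, (1 - X ^ (s + 1))
      = ∏ s ∈ range i, (1 - (X : PowerSeries ℤ) ^ (d + s + 1)) := by
  induction d generalizing i with
  | zero => simp [gaussBinom_zero_left]
  | succ d ihd =>
    induction i with
    | zero => simp [gaussBinom_zero_right]
    | succ i ihi =>
      have hshift : ∏ s ∈ range (i + 1), (1 - (X : PowerSeries ℤ) ^ (d + s + 1))
          = (∏ s ∈ range i, (1 - X ^ (d + 1 + s + 1))) * (1 - X ^ (d + 1)) := by
        rw [prod_range_succ']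
        simp only [add_assoc, add_comm 1, zero_add]
      have hsucc := ihd (i + 1)
      rw [hshift, prod_range_succ] at hsucc
      rw [gaussBinom_succ_succ, prod_range_succ, prod_range_succ]
      linear_combination (1 - (X : PowerSeries ℤ) ^ (i + 1)) * ihi + X ^ (i + 1) * hsucc

theorem prod_mul_invOfUnit_eq_gaussBinom (d i : ℕ) :
    (∏ s ∈ Icc 1 i, (1 - (X : PowerSeries ℤ) ^ (d + s))) *
        invOfUnit (∏ s ∈ Icc 1 i, (1 - (X : PowerSeries ℤ) ^ s)) 1
      = gaussBinom d i := by
  have hIcc (f : ℕ → PowerSeries ℤ) : ∏ s ∈ Icc 1 i, f s = ∏ s ∈ range i, f (s + 1) := by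
    rw [← Ico_add_one_right_eq_Icc, prod_Ico_eq_prod_range]
    simp [add_comm]
  have hunit : constantCoeff (∏ s ∈ range i, (1 - (X : PowerSeries ℤ) ^ (s + 1)))
      = ((1 : ℤˣ) : ℤ) := by
    simp [map_prod]
  simp only [hIcc, ← add_assoc]
  rw [← gaussBinom_mul_prod, mul_assoc, mul_invOfUnit _ _ hunit, mul_one]

end GaussBinom

theorem natCast_add_one_mul_sub_ne_zero {K : Type*} [Ring K] [NoZeroDivisors K] [CharZero K]
    {h m k : ℕ} (hmk : 2 * m + k < h) : ((k : K) + 1) * ((h : K) - 2 * m - k) ≠ 0 := by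
  have hcast : ((h - 2 * m - k : ℕ) : K) = h - 2 * m - k := by
    rw [Nat.cast_sub (by omega), Nat.cast_sub (by omega), Nat.cast_mul, Nat.cast_ofNat]
  rw [← hcast]
  exact mul_ne_zero (Nat.cast_add_one_ne_zero k) (Nat.cast_ne_zero.2 (by omega))

/-- `E` and `F` act on the family `W` like the raising and lowering operators of `sl₂` on the
weight spaces of weight `h - 2m`. -/
structure IsSl2Grading {K V : Type*} [CommRing K] [AddCommGroup V] [Module K V]
    (E F : Module.End K V) (W : ℕ → Submodule K V) (h : ℕ) : Prop where
  E_mem : ∀ m, ∀ v ∈ W (m + 1), E v ∈ W m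
  E_eq_zero : ∀ v ∈ W 0, E v = 0
  F_mem : ∀ m, ∀ v ∈ W m, F v ∈ W (m + 1)
  E_F : ∀ m, ∀ v ∈ W m, E (F v) = F (E v) + ((h : K) - 2 * m) • v

namespace IsSl2Grading

variable {K V : Type*} [Field K] [AddCommGroup V] [Module K V]
  {E F : Module.End K V} {W : ℕ → Submodule K V} {h : ℕ}

theorem pow_F_mem (hW : IsSl2Grading E F W h) {m : ℕ} {v : V} (hv : v ∈ W m) (k : ℕ) :
    (F ^ k) v ∈ W (m + k) := by
  induction k with
  | zero => simpa using hv
  | succ k ih => rw [pow_succ', Module.End.mul_apply, ← add_assoc]; exact hW.F_mem _ _ ih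

theorem E_pow_F (hW : IsSl2Grading E F W h) {m : ℕ} {u : V} (hu : u ∈ W m) (k : ℕ) :
    E ((F ^ (k + 1)) u)
      = (F ^ (k + 1)) (E u) + (((k : K) + 1) * ((h : K) - 2 * m - k)) • (F ^ k) u := by
  induction k with
  | zero => simpa using hW.E_F m u hu
  | succ k ih =>
    rw [pow_succ' F (k + 1), Module.End.mul_apply, hW.E_F _ _ (hW.pow_F_mem hu (k + 1)), ih,
      map_add, map_smul, ← Module.End.mul_apply, ← pow_succ', ← Module.End.mul_apply F,
      ← pow_succ', add_assoc, ← add_smul]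
    congr 2
    push_cast
    ring

/-- By induction on `m`: `E F^(k+1) u = 0` forces `E F^(k+2) (E u) = 0` one weight space lower,
and at `m = 0` the vector `E u` vanishes. -/
theorem pow_F_eq_zero [CharZero K] (hW : IsSl2Grading E F W h) {m k : ℕ} {u : V}
    (hu : u ∈ W m) (hmk : 2 * m + k < h) (hEu : E ((F ^ (k + 1)) u) = 0) : (F ^ k) u = 0 := by
  induction m generalizing k u with
  | zero =>
    rw [hW.E_pow_F hu, hW.E_eq_zero u hu, map_zero, zero_add] at hEu
    exact (smul_eq_zero.1 hEu).resolve_left (natCast_add_one_mul_sub_ne_zero hmk)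
  | succ m ih =>
    set c : K := ((k : K) + 1) * ((h : K) - 2 * ↑(m + 1) - k)
    have hFEu : (F ^ (k + 1)) (E u) = -(c • (F ^ k) u) :=
      eq_neg_of_add_eq_zero_left ((hW.E_pow_F hu k).symm.trans hEu)
    have hEFEu : E ((F ^ (k + 1 + 1)) (E u)) = 0 := by
      rw [pow_succ', Module.End.mul_apply, hFEu, map_neg, map_smul, map_neg, map_smul,
        ← Module.End.mul_apply F (F ^ k), ← pow_succ', hEu, smul_zero, neg_zero]
    rw [hW.E_pow_F hu, ih (hW.E_mem m u hu) (by omega) hEFEu, zero_add] at hEu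
    exact (smul_eq_zero.1 hEu).resolve_left (natCast_add_one_mul_sub_ne_zero hmk)

theorem finrank_inf_ker_add_finrank [CharZero K] (hW : IsSl2Grading E F W h) {m : ℕ}
    [FiniteDimensional K (W m)] [FiniteDimensional K (W (m + 1))] (hm : 2 * m < h) :
    finrank K ↥(W (m + 1) ⊓ LinearMap.ker E) + finrank K (W m) = finrank K (W (m + 1)) := by
  let E' : W (m + 1) →ₗ[K] W m := E.restrict (hW.E_mem m)
  let F' : W m →ₗ[K] W (m + 1) := F.restrict (hW.F_mem m)
  have hinj : Function.Injective (E' ∘ₗ F') := by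
    refine (injective_iff_map_eq_zero _).2 fun v hv => Subtype.ext ?_
    have hEFv : E (F v) = 0 := congrArg Subtype.val hv
    simpa using hW.pow_F_eq_zero (k := 0) v.2 (by omega) (by simpa using hEFv)
  have hsurj : Function.Surjective E' :=
    (show Function.Surjective (E' ∘ F') from LinearMap.injective_iff_surjective.1 hinj).of_comp
  have hker : finrank K (LinearMap.ker E') = finrank K ↥(W (m + 1) ⊓ LinearMap.ker E) := by
    rw [LinearMap.ker_restrict, ← Submodule.map_comap_subtype]
    exact (Submodule.equivMapOfInjective _ (Submodule.injective_subtype _) _).finrank_eq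
  rw [← hker, ← LinearMap.finrank_range_add_finrank_ker E', LinearMap.range_eq_top.2 hsurj,
    finrank_top, add_comm]

end IsSl2Grading

open MvPolynomial

namespace MvPolynomial

variable {σ R : Type*} [Fintype σ] [CommSemiring R]

theorem derivation_eq_sum_pderiv (D : Derivation R (MvPolynomial σ R) (MvPolynomial σ R))
    (p : MvPolynomial σ R) : D p = ∑ k, D (X k) * pderiv k p := by
  classical
  have hsum (q : MvPolynomial σ R) :
      (∑ k, D (X k) • pderiv k) q = ∑ k, D (X k) * pderiv k q := by
    rw [← Derivation.coeFnAddMonoidHom_apply (∑ k, _), map_sum, Finset.sum_apply]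
    rfl
  have hD : D = ∑ k, D (X k) • pderiv k :=
    derivation_ext fun j => by simp [hsum, pderiv_X, Pi.single_apply]
  conv_lhs => rw [hD]
  exact hsum p

theorem mkDerivation_smul_X_monomial (c : σ → R) (α : σ →₀ ℕ) (r : R) :
    mkDerivation R (fun k => c k • X k) (monomial α r) = (∑ k, c k * α k) • monomial α r := by
  rw [derivation_eq_sum_pderiv, Finset.sum_smul]
  refine Finset.sum_congr rfl fun k _ => ?_
  rw [mkDerivation_X, smul_mul_assoc, X_mul_pderiv_monomial, ← Nat.cast_smul_eq_nsmul R,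
    smul_smul]

theorem IsWeightedHomogeneous.derivation {M : Type*} [AddCommGroup M] {w : σ → M} {m δ : M}
    {D : Derivation R (MvPolynomial σ R) (MvPolynomial σ R)}
    (hD : ∀ k, (D (X k)).IsWeightedHomogeneous w (w k + δ)) {p : MvPolynomial σ R}
    (hp : p.IsWeightedHomogeneous w m) : (D p).IsWeightedHomogeneous w (m + δ) := by
  rw [derivation_eq_sum_pderiv]
  refine IsWeightedHomogeneous.sum _ _ _ fun k _ => ?_
  convert (hD k).mul (hp.pderiv (sub_add_cancel m (w k))) using 1
  abel

end MvPolynomial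

/-- The variable `x_n`, taken to be `0` for `n > d`. -/
noncomputable def natX (d n : ℕ) : MvPolynomial (Fin (d + 1)) ℂ :=
  if h : n ≤ d then X ⟨n, by omega⟩ else 0

/-- The lowering operator of the `sl₂`-action whose raising operator is `D1`. -/
noncomputable def D2 (d : ℕ) :
    Derivation ℂ (MvPolynomial (Fin (d + 1)) ℂ) (MvPolynomial (Fin (d + 1)) ℂ) :=
  mkDerivation ℂ fun k => ((d - k : ℕ) : ℂ) • natX d (k + 1)

/-- `x_k` has bidegree `(degree, weight) = (1, k)`, so that `W_{i,N}` is the homogeneous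
component of bidegree `(i, N)`. -/
def degWeight (d : ℕ) (k : Fin (d + 1)) : ℤ × ℤ := (1, k)

section BinaryForm

variable {d i N : ℕ}

theorem natX_val (k : Fin (d + 1)) : natX d k = X k := by
  rw [natX, dif_pos (Fin.is_le k)]

theorem natX_isWeightedHomogeneous (n : ℕ) :
    (natX d n).IsWeightedHomogeneous (degWeight d) (1, n) := by
  unfold natX
  split_ifs
  · exact isWeightedHomogeneous_X ℂ _ _
  · exact isWeightedHomogeneous_zero ℂ _ _

theorem D1_X (k : Fin (d + 1)) : D1 d (X k) = (k : ℂ) • natX d (k - 1) := by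
  rw [D1, mkDerivation_X]
  split_ifs with hk
  · rw [natX, dif_pos (by omega)]
  · simp [show (k : ℕ) = 0 by omega]

theorem D2_X (k : Fin (d + 1)) : D2 d (X k) = ((d - k : ℕ) : ℂ) • natX d (k + 1) :=
  mkDerivation_X _ _ _

theorem D2_natX (n : ℕ) : D2 d (natX d n) = ((d - n : ℕ) : ℂ) • natX d (n + 1) := by
  by_cases hn : n ≤ d
  · rw [natX, dif_pos hn]
    exact D2_X ⟨n, by omega⟩
  · rw [natX, dif_neg hn, map_zero, Nat.sub_eq_zero_of_le (by omega), Nat.cast_zero, zero_smul]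

theorem D1_D2_X (k : Fin (d + 1)) :
    D1 d (D2 d (X k)) = (((d - k : ℕ) : ℂ) * (k + 1)) • X k := by
  rw [D2_X, Derivation.map_smul, mul_smul]
  rcases (Fin.is_le k).lt_or_eq with hk | hk
  · rw [natX, dif_pos (Nat.succ_le_of_lt hk), D1_X]
    simp [natX_val]
  · simp [hk]

theorem D2_D1_X (k : Fin (d + 1)) :
    D2 d (D1 d (X k)) = ((k : ℂ) * ((d - k + 1 : ℕ) : ℂ)) • X k := by
  rw [D1_X, Derivation.map_smul, D2_natX, mul_smul]
  rcases Nat.eq_zero_or_pos (k : ℕ) with hk | hk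
  · simp [hk]
  · rw [Nat.sub_add_cancel hk, natX_val, show d - (k - 1) = d - k + 1 by omega]

theorem commutator_D1_D2 :
    ⁅D1 d, D2 d⁆ = mkDerivation ℂ fun k : Fin (d + 1) => ((d : ℂ) - 2 * k) • X k := by
  refine derivation_ext fun k => ?_
  rw [Derivation.commutator_apply, D1_D2_X, D2_D1_X, mkDerivation_X, ← sub_smul]
  congr 1
  push_cast [Nat.cast_sub (Fin.is_le k)]
  ring

theorem commutator_D1_D2_apply {p : MvPolynomial (Fin (d + 1)) ℂ} (hp : p ∈ Wspace d i N) :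
    ⁅D1 d, D2 d⁆ p = ((d * i : ℂ) - 2 * N) • p := by
  rw [commutator_D1_D2]
  induction hp using Submodule.span_induction with
  | mem x hx =>
    obtain ⟨α, hi, hN, rfl⟩ := hx
    rw [mkDerivation_smul_X_monomial]
    congr 1
    simp only [sub_mul, Finset.sum_sub_distrib, ← hi, ← hN]
    push_cast
    simp only [Finset.mul_sum, mul_assoc]
  | zero => simp
  | add x y _ _ hx hy => rw [map_add, hx, hy, smul_add]
  | smul c x _ hx => rw [Derivation.map_smul, hx, smul_comm]

theorem Wspace_eq_weightedHomogeneousSubmodule (d i N : ℕ) :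
    Wspace d i N = weightedHomogeneousSubmodule ℂ (degWeight d) (i, N) := by
  rw [Wspace, weightedHomogeneousSubmodule_eq_finsupp_supported,
    AddMonoidAlgebra.supported_eq_span_single]
  congr 1
  ext p
  simp only [Set.mem_ofPred_eq, Set.mem_image, single_eq_monomial, Finsupp.weight_eq_sum,
    degWeight, Prod.smul_mk, Prod.ext_iff, Prod.fst_sum, Prod.snd_sum, nsmul_eq_mul, one_mul,
    mul_comm, ← Nat.cast_sum, ← Nat.cast_mul, Nat.cast_inj, and_assoc, eq_comm]

theorem D1_isWeightedHomogeneous {p : MvPolynomial (Fin (d + 1)) ℂ} (hp : p ∈ Wspace d i N) :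
    (D1 d p).IsWeightedHomogeneous (degWeight d) (i, (N : ℤ) - 1) := by
  have hD (k : Fin (d + 1)) :
      (D1 d (X k)).IsWeightedHomogeneous (degWeight d) (degWeight d k + (0, -1)) := by
    rw [D1_X]
    rcases Nat.eq_zero_or_pos (k : ℕ) with hk | hk
    · simp [hk, isWeightedHomogeneous_zero]
    · refine (weightedHomogeneousSubmodule ℂ _ _).smul_mem _ ?_
      have hdeg : degWeight d k + (0, -1) = (1, ((k - 1 : ℕ) : ℤ)) := by
        simp [degWeight, Nat.cast_sub hk, sub_eq_add_neg]
      exact hdeg ▸ natX_isWeightedHomogeneous _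
  rw [Wspace_eq_weightedHomogeneousSubmodule, mem_weightedHomogeneousSubmodule] at hp
  simpa [sub_eq_add_neg] using hp.derivation hD

theorem D1_mem_Wspace {p : MvPolynomial (Fin (d + 1)) ℂ} (hp : p ∈ Wspace d i (N + 1)) :
    D1 d p ∈ Wspace d i N := by
  rw [Wspace_eq_weightedHomogeneousSubmodule, mem_weightedHomogeneousSubmodule]
  simpa using D1_isWeightedHomogeneous hp

theorem D1_eq_zero_of_mem_Wspace_zero {p : MvPolynomial (Fin (d + 1)) ℂ}
    (hp : p ∈ Wspace d i 0) : D1 d p = 0 := by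
  refine (D1_isWeightedHomogeneous hp).eq_zero_of_no_monomials fun α hα => ?_
  have hwt : 0 ≤ (Finsupp.weight (degWeight d) α).2 := by
    simp only [Finsupp.weight_eq_sum, Prod.snd_sum]
    exact Finset.sum_nonneg fun k _ => by simp [degWeight]; positivity
  rw [hα] at hwt
  simp at hwt

theorem D2_mem_Wspace {p : MvPolynomial (Fin (d + 1)) ℂ} (hp : p ∈ Wspace d i N) :
    D2 d p ∈ Wspace d i (N + 1) := by
  have hD (k : Fin (d + 1)) :
      (D2 d (X k)).IsWeightedHomogeneous (degWeight d) (degWeight d k + (0, 1)) := by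
    rw [D2_X]
    refine (weightedHomogeneousSubmodule ℂ _ _).smul_mem _ ?_
    have hdeg : degWeight d k + (0, 1) = (1, ((k + 1 : ℕ) : ℤ)) := by simp [degWeight]
    exact hdeg ▸ natX_isWeightedHomogeneous _
  rw [Wspace_eq_weightedHomogeneousSubmodule, mem_weightedHomogeneousSubmodule] at hp ⊢
  have hdeg : ((i : ℤ), (N : ℤ)) + (0, 1) = ((i : ℤ), ((N + 1 : ℕ) : ℤ)) := by simp
  exact hdeg ▸ hp.derivation hD

theorem isSl2Grading_Wspace (d i : ℕ) :
    IsSl2Grading (D1 d).toLinearMap (D2 d).toLinearMap (Wspace d i) (d * i) where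
  E_mem _ _ := D1_mem_Wspace
  E_eq_zero _ := D1_eq_zero_of_mem_Wspace_zero
  F_mem _ _ := D2_mem_Wspace
  E_F _ _ hv := by
    have hcomm := commutator_D1_D2_apply hv
    rw [Derivation.commutator_apply] at hcomm
    simpa using sub_eq_iff_eq_add'.1 hcomm

end BinaryForm

section Dimension

open Finset Finset.Nat

theorem Wspace_eq_span_range (d i N : ℕ) :
    Wspace d i N = Submodule.span ℂ (Set.range fun α :
      {α ∈ antidiagonalTuple (d + 1) i | ∑ k : Fin (d + 1), (k : ℕ) * α k = N} =>
        monomial (Finsupp.equivFunOnFinite.symm α.1) (1 : ℂ)) := by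
  rw [Wspace]
  congr 1
  ext p
  simp only [Set.mem_ofPred_eq, Set.mem_range, Subtype.exists, mem_filter, mem_antidiagonalTuple]
  constructor
  · rintro ⟨α, hi, hN, rfl⟩
    exact ⟨α, ⟨hi, hN⟩, by simp⟩
  · rintro ⟨α, ⟨hi, hN⟩, rfl⟩
    exact ⟨_, by simpa using hi, by simpa using hN, rfl⟩

instance (d i N : ℕ) : FiniteDimensional ℂ (Wspace d i N) := by
  rw [Wspace_eq_span_range]
  exact FiniteDimensional.span_of_finite ℂ (Set.finite_range _)

theorem finrank_Wspace (d i N : ℕ) :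
    (finrank ℂ (Wspace d i N) : ℤ) = PowerSeries.coeff N (gaussBinom d i) := by
  rw [coeff_gaussBinom, Wspace_eq_span_range, finrank_span_eq_card, Fintype.card_coe]
  exact (basisMonomials (Fin (d + 1)) ℂ).linearIndependent.comp
    (Finsupp.equivFunOnFinite.symm ∘ Subtype.val)
    (Finsupp.equivFunOnFinite.symm.injective.comp Subtype.val_injective)

theorem finrank_Wspace_inf_ker (d i N : ℕ) (hN : 2 * N ≤ d * i) :
    (finrank ℂ ↥(Wspace d i N ⊓ LinearMap.ker (D1 d).toLinearMap) : ℤ)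
      = PowerSeries.coeff N ((1 - PowerSeries.X) * gaussBinom d i) := by
  rw [sub_mul, one_mul, map_sub]
  cases N with
  | zero =>
    have hker : Wspace d i 0 ⊓ LinearMap.ker (D1 d).toLinearMap = Wspace d i 0 :=
      inf_eq_left.2 fun p hp => D1_eq_zero_of_mem_Wspace_zero hp
    rw [hker, finrank_Wspace, PowerSeries.coeff_zero_X_mul, sub_zero]
  | succ n =>
    have hdim := (isSl2Grading_Wspace d i).finrank_inf_ker_add_finrank (m := n) (by omega)
    rw [PowerSeries.coeff_succ_X_mul, ← finrank_Wspace, ← finrank_Wspace, ← hdim]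
    push_cast
    ring

end Dimension

theorem stmt5_general (d i j : ℕ) :
    (Module.finrank ℂ
        ↥(Wspace d i ((d * i - j) / 2) ⊓ LinearMap.ker (D1 d).toLinearMap) : ℤ)
      = PowerSeries.coeff ((d * i - j) / 2)
          ((1 - PowerSeries.X) *
            (∏ s ∈ Finset.Icc 1 i, (1 - (PowerSeries.X : PowerSeries ℤ) ^ (d + s))) *
            PowerSeries.invOfUnit
              (∏ s ∈ Finset.Icc 1 i, (1 - (PowerSeries.X : PowerSeries ℤ) ^ s)) 1) := by
  rw [mul_assoc, prod_mul_invOfUnit_eq_gaussBinom]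
  exact finrank_Wspace_inf_ker d i _ (by omega)

theorem stmt5 (d i j : ℕ) (hd : 1 ≤ d) (hj : j ≤ d * i) (hpar : (d * i - j) % 2 = 0) :
    (Module.finrank ℂ
        ↥(Wspace d i ((d * i - j) / 2) ⊓ LinearMap.ker (D1 d).toLinearMap) : ℤ)
      = PowerSeries.coeff ((d * i - j) / 2)
          ((1 - PowerSeries.X) *
            (∏ s ∈ Finset.Icc 1 i, (1 - (PowerSeries.X : PowerSeries ℤ) ^ (d + s))) *
            PowerSeries.invOfUnit
              (∏ s ∈ Finset.Icc 1 i, (1 - (PowerSeries.X : PowerSeries ℤ) ^ s)) 1) :=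
  stmt5_general d i j
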